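/- arXiv:2108.08947 — 3 statements merged into one kernel-verified Lean document; each statement's English description precedes it below -/
import Mathlib

section
/- (Kummer recurrence 13.4.6) For real a, b, x with b, b−1 not nonpositive integers: (a−1+x)·₁F₁(a;b;x) + (b−a)·₁F₁(a−1;b;x) + (1−b)·₁F₁(a;b−1;x) = 0. -/
open Polynomial

/-- Ascending factorial (Pochhammer symbol). -/
noncomputable def asc (a : ℝ) (n : ℕ) : ℝ := (ascPochhammer ℝ n).eval a

/-- Kummer confluent hypergeometric function `₁F₁(a; b; x)`. -/
noncomputable def F11 (a b x : ℝ) : ℝ := ∑' i : ℕ, asc a i / asc b i * x ^ i / (i.factorial : ℝ)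

lemma asc_zero (a : ℝ) : asc a 0 = 1 := by simp [asc]

lemma asc_succ (a : ℝ) (n : ℕ) : asc a (n+1) = asc a n * (a + n) := by
  simp [asc, ascPochhammer_succ_eval]

lemma asc_succ_left (a : ℝ) (n : ℕ) : asc a (n+1) = a * asc (a+1) n := by
  simp [asc, ascPochhammer_succ_left, eval_comp]

lemma asc_ne_zero {b : ℝ} (hb : ∀ n : ℕ, b ≠ -(n : ℝ)) (n : ℕ) : asc b n ≠ 0 := by
  induction n with
  | zero => simp [asc_zero]
  | succ n ih =>
    rw [asc_succ]
    refine mul_ne_zero ih ?_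
    intro h
    exact hb n (by linarith)

open Filter in
lemma summable_F11 (a b x : ℝ) (hb : ∀ n : ℕ, b ≠ -(n : ℝ)) :
    Summable (fun i : ℕ => asc a i / asc b i * x ^ i / (i.factorial : ℝ)) := by
  set f : ℕ → ℝ := fun i => asc a i / asc b i * x ^ i / (i.factorial : ℝ) with hf
  obtain ⟨N, hN⟩ := exists_nat_ge (2*|b| + 2*|a-b| + 4*|x| + 2)
  apply summable_of_ratio_norm_eventually_le (r := 1/2) (by norm_num)
  filter_upwards [eventually_ge_atTop N] with n hn
  have hn' : (2*|b| + 2*|a-b| + 4*|x| + 2) ≤ (n:ℝ) := le_trans hN (by exact_mod_cast hn)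
  have hbn : b + (n:ℝ) ≠ 0 := fun h => hb n (by linarith)
  have hQ : asc b n ≠ 0 := asc_ne_zero hb n
  have hfac : (n.factorial : ℝ) ≠ 0 := Nat.cast_ne_zero.2 n.factorial_ne_zero
  have hstep : f (n+1) = f n * ((a + n) / (b + n)) * (x / (n+1)) := by
    simp only [hf]
    rw [asc_succ a n, asc_succ b n, Nat.factorial_succ]
    push_cast
    field_simp
    ring
  have habs : ‖f (n+1)‖ = ‖f n‖ * (|a + n| / |b + n|) * (|x| / (n+1)) := by
    rw [hstep]
    simp [abs_mul, abs_div, Nat.abs_cast, abs_of_nonneg (by positivity : (0:ℝ) ≤ (n:ℝ)+1)]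
  rw [habs]
  have hd : |b + (n:ℝ)| ≥ (n:ℝ) - |b| := by
    have h2 : |(n:ℝ)| = (n:ℝ) := abs_of_nonneg (Nat.cast_nonneg n)
    linarith [abs_add_le b (n:ℝ), le_abs_self (b + n), neg_abs_le (b+n), neg_abs_le b,
      le_abs_self ((n:ℝ))]
  have he : |a + (n:ℝ)| ≤ |a - b| + |b + n| := by
    calc |a + (n:ℝ)| = |(a - b) + (b + n)| := by ring_nf
    _ ≤ |a - b| + |b + n| := abs_add_le _ _
  have hd0 : (0:ℝ) < |b + n| := by
    have h1 : (0:ℝ) ≤ |b| := abs_nonneg b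
    have h2 : (0:ℝ) ≤ |a-b| := abs_nonneg _
    have h3 : (0:ℝ) ≤ |x| := abs_nonneg _
    linarith
  have hkey : |a + (n:ℝ)| / |b + n| * (|x| / (n+1)) ≤ 1/2 := by
    rw [div_mul_div_comm, div_le_iff₀ (by positivity)]
    have h2 : (0:ℝ) ≤ |a-b| := abs_nonneg _
    have h3 : (0:ℝ) ≤ |x| := abs_nonneg _
    have h1 : (0:ℝ) ≤ |b| := abs_nonneg b
    nlinarith [mul_nonneg (le_of_lt hd0) (by linarith : (0:ℝ) ≤ (n:ℝ) + 1 - 4*|x|),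
      mul_nonneg (by linarith : (0:ℝ) ≤ |b+(n:ℝ)| - |a-b|) h3]
  calc ‖f n‖ * (|a + n| / |b + n|) * (|x| / (n+1))
      = ‖f n‖ * (|a + (n:ℝ)| / |b + n| * (|x| / (n+1))) := by ring
    _ ≤ ‖f n‖ * (1/2) := mul_le_mul_of_nonneg_left hkey (norm_nonneg _)
    _ = 1/2 * ‖f n‖ := by ring

theorem kummer_recurrence_13_4_6 (a b x : ℝ)
    (hb : ∀ n : ℕ, b ≠ -(n : ℝ)) (hb1 : ∀ n : ℕ, b - 1 ≠ -(n : ℝ)) :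
    (a - 1 + x) * F11 a b x + (b - a) * F11 (a - 1) b x + (1 - b) * F11 a (b - 1) x = 0 := by
  set f1 : ℕ → ℝ := fun i => asc a i / asc b i * x ^ i / (i.factorial : ℝ) with hf1
  set f2 : ℕ → ℝ := fun i => asc (a-1) i / asc b i * x ^ i / (i.factorial : ℝ) with hf2
  set f3 : ℕ → ℝ := fun i => asc a i / asc (b-1) i * x ^ i / (i.factorial : ℝ) with hf3
  set u : ℕ → ℝ := fun n => (a-1) * f1 n + ((b-a) * f2 n + (1-b) * f3 n) with hu_def
  have h1 : Summable f1 := summable_F11 a b x hb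
  have h2 : Summable f2 := summable_F11 (a-1) b x hb
  have h3 : Summable f3 := summable_F11 a (b-1) x hb1
  have hu : Summable u := (h1.mul_left _).add ((h2.mul_left _).add (h3.mul_left _))
  have hb1' : b - 1 ≠ 0 := by simpa using hb1 0
  have hu0 : u 0 = 0 := by
    simp only [hu_def, hf1, hf2, hf3]
    simp [asc_zero]
  have hrec : ∀ n : ℕ, u (n+1) = -(x * f1 n) := by
    intro n
    have hQ : asc b n ≠ 0 := asc_ne_zero hb n
    have hbn : b + (n:ℝ) ≠ 0 := fun h => hb n (by linarith)
    have hfac : (n.factorial : ℝ) ≠ 0 := Nat.cast_ne_zero.2 n.factorial_ne_zero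
    have e2 : asc (a-1) (n+1) = (a-1) * asc a n := by
      rw [asc_succ_left]; ring_nf
    have e3 : asc (b-1) (n+1) = (b-1) * asc b n := by
      rw [asc_succ_left]; ring_nf
    simp only [hu_def, hf1, hf2, hf3]
    rw [asc_succ a n, asc_succ b n, e2, e3, Nat.factorial_succ]
    push_cast
    field_simp
    ring
  have eF1 : F11 a b x = ∑' n, f1 n := rfl
  have eF2 : F11 (a-1) b x = ∑' n, f2 n := rfl
  have eF3 : F11 a (b-1) x = ∑' n, f3 n := rfl
  have hsum_u : ∑' n, u n = (a-1) * ∑' n, f1 n + ((b-a) * ∑' n, f2 n + (1-b) * ∑' n, f3 n) := by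
    rw [← tsum_mul_left, ← tsum_mul_left, ← tsum_mul_left,
      ← Summable.tsum_add (h2.mul_left _) (h3.mul_left _),
      ← Summable.tsum_add (h1.mul_left _) ((h2.mul_left _).add (h3.mul_left _))]
  have hshift : ∑' n, u n = -(x * ∑' n, f1 n) := by
    rw [Summable.tsum_eq_zero_add hu, hu0, zero_add, tsum_congr hrec, tsum_neg, tsum_mul_left]
  rw [eF1, eF2, eF3]
  have : (a - 1 + x) * (∑' n, f1 n) + (b - a) * (∑' n, f2 n) + (1 - b) * (∑' n, f3 n)
      = (∑' n, u n) + x * ∑' n, f1 n := by rw [hsum_u]; ring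
  rw [this, hshift]
  ring
end

section
/- For natural numbers m, j₁, j₂ and reals θ₁, θ₂ with θ₁,θ₂ ≥ 0, θ₁+θ₂ ≤ 1: Σ_{l₁+l₂ ≤ m} (l₁+1)_{j₁}(l₂+1)_{j₂} · (m!/(l₁!l₂!(m−l₁−l₂)!)) θ₁^{l₁}θ₂^{l₂}(1−θ₁−θ₂)^{m−l₁−l₂} = j₁! j₂! Σ_{l₁+l₂ ≤ m} C(l₁+j₁,l₁) C(j₂,l₂) (m!/(l₁!l₂!(m−l₁−l₂)!)) (1−θ₁)^{m−l₁−l₂} θ₁^{l₁} θ₂^{l₂}. -/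
/-!
With `(l + 1)_j = j! C(l + j, l)` and `m! / (l₁! l₂! (m - l₁ - l₂)!) = C(m, l₁) C(m - l₁, l₂)`,
the two sides agree summand by summand in `l₁`, up to the identity
`∑ₖ C(k + j, k) C(n, k) tᵏ uⁿ⁻ᵏ = ∑ₗ C(j, l) C(n, l) tˡ (t + u)ⁿ⁻ˡ`
at `t = θ₂`, `u = 1 - θ₁ - θ₂`. For that one, expand `C(k + j, k) = ∑ₗ C(j, l) C(k, l)` by
Vandermonde, exchange the sums, and sum over `k` using `C(n, k) C(k, l) = C(n, l) C(n - l, k - l)`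
and the binomial theorem.
-/

open Polynomial Finset

theorem asc_natCast_add_one (l j : ℕ) :
    asc ((l : ℝ) + 1) j = j.factorial * (l + j).choose l := by
  rw [asc, ← Nat.cast_succ, ← ascPochhammer_eval_cast, ascPochhammer_nat_eq_ascFactorial,
    Nat.ascFactorial_eq_factorial_mul_choose, ← Nat.choose_symm_add]
  push_cast; ring

theorem factorial_div_eq_choose_mul_choose {K : Type*} [Field K] [CharZero K] {m a b : ℕ}
    (ha : a ≤ m) (hb : b ≤ m - a) :
    (m.factorial : K) / (a.factorial * b.factorial * (m - a - b).factorial) =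
      m.choose a * (m - a).choose b := by
  rw [Nat.cast_choose K ha, Nat.cast_choose K hb]
  field_simp
  rw [mul_div_mul_right _ _ (Nat.cast_ne_zero.mpr (Nat.factorial_ne_zero _))]

theorem Nat.add_choose_eq_sum_choose_mul_choose {j k n : ℕ} (hk : k ≤ n) :
    (k + j).choose k = ∑ l ∈ range (n + 1), j.choose l * k.choose l := by
  rw [add_comm, Nat.add_choose_eq, Nat.sum_antidiagonal_eq_sum_range_succ_mk]
  refine (sum_congr rfl fun l hl => ?_).trans
    (sum_subset (range_subset_range.mpr (by omega)) fun l _ hl => ?_)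
  · rw [Nat.choose_symm (mem_range_succ_iff.mp hl)]
  · rw [Nat.choose_eq_zero_of_lt (n := k) (by simpa using hl), mul_zero]

theorem sum_choose_mul_choose_mul_pow_mul_pow {R : Type*} [CommSemiring R] {n l : ℕ}
    (hl : l ≤ n) (t u : R) :
    ∑ k ∈ range (n + 1), (n.choose k * k.choose l : R) * t ^ k * u ^ (n - k) =
      n.choose l * t ^ l * (t + u) ^ (n - l) := by
  obtain ⟨d, rfl⟩ := Nat.exists_eq_add_of_le hl
  rw [add_assoc, sum_range_add, Nat.add_sub_cancel_left, add_pow,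
    mul_sum, sum_eq_zero fun k hk => by rw [Nat.choose_eq_zero_of_lt (mem_range.mp hk)]; simp,
    zero_add]
  refine sum_congr rfl fun k _ => ?_
  rw [← Nat.cast_mul, Nat.choose_mul (Nat.le_add_right l k), Nat.add_sub_cancel_left,
    Nat.add_sub_cancel_left, Nat.add_sub_add_left]
  push_cast
  ring

theorem sum_add_choose_mul_choose_mul_pow_mul_pow {R : Type*} [CommSemiring R] (n j : ℕ)
    (t u : R) :
    ∑ k ∈ range (n + 1), ((k + j).choose k * n.choose k : R) * t ^ k * u ^ (n - k) =
      ∑ l ∈ range (n + 1), (j.choose l * n.choose l : R) * t ^ l * (t + u) ^ (n - l) := by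
  calc
    _ = ∑ k ∈ range (n + 1), ∑ l ∈ range (n + 1),
          (j.choose l : R) * ((n.choose k * k.choose l : R) * t ^ k * u ^ (n - k)) := by
      refine sum_congr rfl fun k hk => ?_
      rw [Nat.add_choose_eq_sum_choose_mul_choose (mem_range_succ_iff.mp hk)]
      push_cast
      rw [sum_mul, sum_mul, sum_mul]
      exact sum_congr rfl fun l _ => by ring
    _ = _ := by
      rw [sum_comm]
      refine sum_congr rfl fun l hl => ?_
      rw [← mul_sum, sum_choose_mul_choose_mul_pow_mul_pow (mem_range_succ_iff.mp hl)]
      ring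

theorem multinomial_factorial_moment_step_general (m j1 j2 : ℕ) (θ1 θ2 : ℝ) :
    ∑ l1 ∈ range (m + 1), ∑ l2 ∈ range (m - l1 + 1),
        asc ((l1 : ℝ) + 1) j1 * asc ((l2 : ℝ) + 1) j2 *
          ((m.factorial : ℝ) /
              ((l1.factorial : ℝ) * (l2.factorial : ℝ) * ((m - l1 - l2).factorial : ℝ)) *
            θ1 ^ l1 * θ2 ^ l2 * (1 - θ1 - θ2) ^ (m - l1 - l2)) =
      (j1.factorial : ℝ) * (j2.factorial : ℝ) *
        ∑ l1 ∈ range (m + 1), ∑ l2 ∈ range (m - l1 + 1),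
          ((l1 + j1).choose l1 : ℝ) * (j2.choose l2 : ℝ) *
            ((m.factorial : ℝ) /
                ((l1.factorial : ℝ) * (l2.factorial : ℝ) * ((m - l1 - l2).factorial : ℝ))) *
            (1 - θ1) ^ (m - l1 - l2) * θ1 ^ l1 * θ2 ^ l2 := by
  rw [mul_sum]
  refine sum_congr rfl fun l1 hl1 => ?_
  have hl1 := mem_range_succ_iff.mp hl1
  set n := m - l1
  set c : ℝ := j1.factorial * j2.factorial * (l1 + j1).choose l1 * m.choose l1 * θ1 ^ l1
  calc
    _ = c * ∑ l2 ∈ range (n + 1),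
          ((l2 + j2).choose l2 * n.choose l2 : ℝ) * θ2 ^ l2 * (1 - θ1 - θ2) ^ (n - l2) := by
      rw [mul_sum]
      refine sum_congr rfl fun l2 hl2 => ?_
      rw [asc_natCast_add_one, asc_natCast_add_one,
        factorial_div_eq_choose_mul_choose hl1 (mem_range_succ_iff.mp hl2)]
      ring
    _ = c * ∑ l2 ∈ range (n + 1),
          (j2.choose l2 * n.choose l2 : ℝ) * θ2 ^ l2 * (1 - θ1) ^ (n - l2) := by
      rw [sum_add_choose_mul_choose_mul_pow_mul_pow, add_sub_cancel]
    _ = _ := by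
      rw [mul_sum, mul_sum]
      refine sum_congr rfl fun l2 hl2 => ?_
      rw [factorial_div_eq_choose_mul_choose hl1 (mem_range_succ_iff.mp hl2)]
      ring

/-- Intermediate combinatorial step (one application of Ljunggren's identity) in computing
Multinomial factorial moments. -/
theorem multinomial_factorial_moment_step (m j1 j2 : ℕ) (θ1 θ2 : ℝ)
    (h1 : 0 ≤ θ1) (h2 : 0 ≤ θ2) (hsum : θ1 + θ2 ≤ 1) :
    ∑ l1 ∈ range (m + 1), ∑ l2 ∈ range (m - l1 + 1),
        asc ((l1 : ℝ) + 1) j1 * asc ((l2 : ℝ) + 1) j2 *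
          ((m.factorial : ℝ) /
              ((l1.factorial : ℝ) * (l2.factorial : ℝ) * ((m - l1 - l2).factorial : ℝ)) *
            θ1 ^ l1 * θ2 ^ l2 * (1 - θ1 - θ2) ^ (m - l1 - l2)) =
      (j1.factorial : ℝ) * (j2.factorial : ℝ) *
        ∑ l1 ∈ range (m + 1), ∑ l2 ∈ range (m - l1 + 1),
          ((l1 + j1).choose l1 : ℝ) * (j2.choose l2 : ℝ) *
            ((m.factorial : ℝ) /
                ((l1.factorial : ℝ) * (l2.factorial : ℝ) * ((m - l1 - l2).factorial : ℝ))) *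
            (1 - θ1) ^ (m - l1 - l2) * θ1 ^ l1 * θ2 ^ l2 :=
  multinomial_factorial_moment_step_general m j1 j2 θ1 θ2
end

section
/- With the notation of the Non-central Dirichlet mixed moment formula, the mean cross product satisfies E[X'₁X'₂] = (α₁α₂/(α⁺)₂) e^{−λ⁺/2} ₁F₁(α⁺;α⁺+2;λ⁺/2) + ((α₁λ₂/2 + α₂λ₁/2)/((α⁺+1)₂)) e^{−λ⁺/2} ₁F₁(α⁺+1;α⁺+3;λ⁺/2) + ((λ₁/2)(λ₂/2)/((α⁺+2)₂)) e^{−λ⁺/2} ₁F₁(α⁺+2;α⁺+4;λ⁺/2). -/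
/-!
With `M₁, M₂, M₃` independent Poisson variables of rates `rᵢ = λᵢ / 2`, the left-hand side is
`E[(α₁ + M₁) (α₂ + M₂) f (M₁ + M₂ + M₃)]` with `f n = 1 / ((α⁺ + n) (α⁺ + n + 1))`. Expanding the
product and using the Poisson identity `E[M g(M)] = r E[g(M + 1)]` in `M₁` and in `M₂` leaves
the expectations `E[f (M + k)]`, `k = 0, 1, 2`, of `M = M₁ + M₂ + M₃`, which is Poisson of rate
`λ⁺ / 2`.
Since `(a)ₙ / (a + 2)ₙ = a (a + 1) / ((a + n) (a + n + 1))`, each of them equals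
`e^{-λ⁺/2} ₁F₁(a; a + 2; λ⁺/2) / (a (a + 1))` with `a = α⁺ + k`. Computing with lower integrals in
`ℝ≥0∞` makes every rearrangement free of summability conditions.
-/

open Polynomial

open MeasureTheory ProbabilityTheory Real
open scoped NNReal ENNReal Nat

namespace ProbabilityTheory

lemma lintegral_poissonMeasure_eq_tsum (r : ℝ≥0) (g : ℕ → ℝ≥0∞) :
    ∫⁻ n, g n ∂Po(r) = ∑' n, ENNReal.ofReal (exp (-r) * r ^ n / n !) * g n := by
  simp_rw [lintegral_countable', poissonMeasure_singleton, mul_comm (g _)]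

lemma lintegral_poissonMeasure_natCast_mul (r : ℝ≥0) (g : ℕ → ℝ≥0∞) :
    ∫⁻ n, n * g n ∂Po(r) = r * ∫⁻ n, g (n + 1) ∂Po(r) := by
  have weight_succ (n : ℕ) :
      exp (-r) * r ^ (n + 1) / (n + 1)! * (n + 1) = r * (exp (-r) * r ^ n / n !) := by
    rw [Nat.factorial_succ]
    push_cast
    field_simp
    ring
  rw [lintegral_poissonMeasure_eq_tsum, lintegral_poissonMeasure_eq_tsum,
    tsum_eq_zero_add' ENNReal.summable, ← ENNReal.tsum_mul_left]
  simp only [Nat.cast_zero, zero_mul, mul_zero, zero_add]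
  refine tsum_congr fun n => ?_
  rw [← mul_assoc, ← mul_assoc]
  congr 1
  rw [← ENNReal.ofReal_coe_nnreal, ← ENNReal.ofReal_mul (by positivity), ← weight_succ,
    ENNReal.ofReal_mul (by positivity)]
  norm_cast

lemma lintegral_poissonMeasure_add_natCast_mul (r : ℝ≥0) (A : ℝ≥0∞) (g : ℕ → ℝ≥0∞) :
    ∫⁻ n, (A + n) * g n ∂Po(r) = A * ∫⁻ n, g n ∂Po(r) + r * ∫⁻ n, g (n + 1) ∂Po(r) := by
  simp_rw [add_mul]
  rw [lintegral_add_left measurable_from_nat, lintegral_const_mul _ measurable_from_nat,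
    lintegral_poissonMeasure_natCast_mul]

lemma lintegral_lintegral_poissonMeasure_add (r₁ r₂ : ℝ≥0) (g : ℕ → ℝ≥0∞) :
    ∫⁻ a, ∫⁻ b, g (a + b) ∂Po(r₂) ∂Po(r₁) = ∫⁻ n, g n ∂Po(r₁ + r₂) := by
  rw [← poissonMeasure_conv_poissonMeasure, Measure.lintegral_conv measurable_from_nat]

lemma lintegral_lintegral_lintegral_poissonMeasure_add (r₁ r₂ r₃ : ℝ≥0) (g : ℕ → ℝ≥0∞) :
    ∫⁻ a, ∫⁻ b, ∫⁻ c, g (a + b + c) ∂Po(r₃) ∂Po(r₂) ∂Po(r₁) = ∫⁻ n, g n ∂Po(r₁ + r₂ + r₃) := by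
  have inner (a : ℕ) : ∫⁻ b, ∫⁻ c, g (a + (b + c)) ∂Po(r₃) ∂Po(r₂) = ∫⁻ m, g (a + m) ∂Po(r₂ + r₃) :=
    lintegral_lintegral_poissonMeasure_add r₂ r₃ (fun m => g (a + m))
  simp_rw [add_assoc, inner]
  exact lintegral_lintegral_poissonMeasure_add r₁ (r₂ + r₃) g

lemma lintegral_lintegral_poissonMeasure_add_mul_add (r₁ r₂ : ℝ≥0) (A₁ A₂ : ℝ≥0∞)
    (Φ : ℕ → ℕ → ℝ≥0∞) :
    ∫⁻ a, ∫⁻ b, (A₁ + a) * (A₂ + b) * Φ a b ∂Po(r₂) ∂Po(r₁) =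
      A₁ * A₂ * ∫⁻ a, ∫⁻ b, Φ a b ∂Po(r₂) ∂Po(r₁) +
        A₁ * r₂ * ∫⁻ a, ∫⁻ b, Φ a (b + 1) ∂Po(r₂) ∂Po(r₁) +
        A₂ * r₁ * ∫⁻ a, ∫⁻ b, Φ (a + 1) b ∂Po(r₂) ∂Po(r₁) +
        r₁ * r₂ * ∫⁻ a, ∫⁻ b, Φ (a + 1) (b + 1) ∂Po(r₂) ∂Po(r₁) := by
  simp_rw [mul_assoc (A₁ + _), lintegral_const_mul _ measurable_from_nat,
    lintegral_poissonMeasure_add_natCast_mul, lintegral_add_left measurable_from_nat,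
    lintegral_const_mul _ measurable_from_nat]
  ring

lemma lintegral_poissonMeasure_mixed_moment (r₁ r₂ r₃ : ℝ≥0) (A₁ A₂ : ℝ≥0∞) (f : ℕ → ℝ≥0∞) :
    ∫⁻ a, ∫⁻ b, ∫⁻ c, (A₁ + a) * (A₂ + b) * f (a + b + c) ∂Po(r₃) ∂Po(r₂) ∂Po(r₁) =
      A₁ * A₂ * ∫⁻ n, f n ∂Po(r₁ + r₂ + r₃) +
        (A₁ * r₂ + A₂ * r₁) * ∫⁻ n, f (n + 1) ∂Po(r₁ + r₂ + r₃) +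
        r₁ * r₂ * ∫⁻ n, f (n + 2) ∂Po(r₁ + r₂ + r₃) := by
  have shifted (k : ℕ) : ∫⁻ a, ∫⁻ b, ∫⁻ c, f (a + b + c + k) ∂Po(r₃) ∂Po(r₂) ∂Po(r₁) =
      ∫⁻ n, f (n + k) ∂Po(r₁ + r₂ + r₃) :=
    lintegral_lintegral_lintegral_poissonMeasure_add r₁ r₂ r₃ (fun n => f (n + k))
  simp_rw [lintegral_const_mul _ measurable_from_nat]
  rw [lintegral_lintegral_poissonMeasure_add_mul_add]
  -- bring `a + (b + 1) + c`, `a + 1 + b + c` and `a + 1 + (b + 1) + c` to the form `a + b + c + k`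
  simp only [← Nat.add_assoc, Nat.add_right_comm _ 1, Nat.add_assoc _ 1 1, Nat.reduceAdd]
  rw [shifted 1, shifted 2, lintegral_lintegral_lintegral_poissonMeasure_add]
  ring

lemma lintegral_lintegral_lintegral_poissonMeasure_eq_tsum (r₁ r₂ r₃ : ℝ≥0)
    (F : ℕ → ℕ → ℕ → ℝ≥0∞) :
    ∫⁻ a, ∫⁻ b, ∫⁻ c, F a b c ∂Po(r₃) ∂Po(r₂) ∂Po(r₁) =
      ∑' j : ℕ × ℕ × ℕ, ENNReal.ofReal (exp (-r₁) * r₁ ^ j.1 / j.1 ! *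
        (exp (-r₂) * r₂ ^ j.2.1 / j.2.1 !) * (exp (-r₃) * r₃ ^ j.2.2 / j.2.2 !)) *
          F j.1 j.2.1 j.2.2 := by
  have nonneg (r : ℝ≥0) (n : ℕ) : 0 ≤ exp (-r) * r ^ n / n ! := by positivity
  simp_rw [lintegral_poissonMeasure_eq_tsum, ENNReal.tsum_prod', ← ENNReal.tsum_mul_left,
    ENNReal.ofReal_mul (mul_nonneg (nonneg _ _) (nonneg _ _)), ENNReal.ofReal_mul (nonneg _ _),
    mul_assoc]

end ProbabilityTheory

lemma asc_mul_add_mul_add_one (a : ℝ) (n : ℕ) :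
    asc a n * ((a + n) * (a + n + 1)) = a * (a + 1) * asc (a + 2) n := by
  have right : asc a (n + 2) = asc a n * ((a + n) * (a + n + 1)) := by
    simp only [asc, ascPochhammer_succ_eval]
    push_cast
    ring
  have left : asc a (n + 2) = a * (a + 1) * asc (a + 2) n := by
    simp only [asc, ascPochhammer_succ_left, eval_mul, eval_comp, eval_X, eval_add, eval_one]
    ring_nf
  rw [← right, left]

lemma asc_pos {a : ℝ} (ha : 0 < a) (n : ℕ) : 0 < asc a n := by
  simpa [asc] using ascPochhammer_pos n a ha

lemma F11_nonneg {a b x : ℝ} (ha : 0 < a) (hb : 0 < b) (hx : 0 ≤ x) : 0 ≤ F11 a b x :=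
  tsum_nonneg fun i => by
    have := asc_pos ha i
    have := asc_pos hb i
    positivity

lemma lintegral_poissonMeasure_ofReal_one_div_mul {a : ℝ} (ha : 0 < a) (r : ℝ≥0) :
    ∫⁻ n, ENNReal.ofReal (1 / ((a + n) * (a + n + 1))) ∂Po(r) =
      ENNReal.ofReal (exp (-r) / (a * (a + 1)) * F11 a (a + 2) r) := by
  have term (n : ℕ) : exp (-r) * r ^ n / n ! * (1 / ((a + n) * (a + n + 1))) =
      exp (-r) / (a * (a + 1)) * (asc a n / asc (a + 2) n * r ^ n / n !) := by
    have key := asc_mul_add_mul_add_one a n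
    have := asc_pos ha n
    have := asc_pos (by linarith : 0 < a + 2) n
    field_simp
    linear_combination -(r : ℝ) ^ n * key
  have bound (n : ℕ) : exp (-r) * r ^ n / n ! * (1 / ((a + n) * (a + n + 1))) ≤
      exp (-r) * r ^ n / n ! * (1 / (a * (a + 1))) := by
    gcongr <;> simp
  have summable : Summable fun n : ℕ => exp (-r) * r ^ n / n ! * (1 / ((a + n) * (a + n + 1))) :=
    ((hasSum_one_poissonMeasure r).summable.mul_right _).of_nonneg_of_le
      (fun n => by positivity) bound
  rw [lintegral_poissonMeasure_eq_tsum, ← tsum_congr fun n => ENNReal.ofReal_mul (by positivity),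
    ← ENNReal.ofReal_tsum_of_nonneg (fun n => by positivity) summable]
  simp_rw [term, tsum_mul_left, F11]

lemma tsum_eq_toReal_tsum_ofReal {ι : Type*} {u : ι → ℝ} (hu : ∀ i, 0 ≤ u i) :
    ∑' i, u i = (∑' i, ENNReal.ofReal (u i)).toReal := by
  rw [ENNReal.tsum_toReal_eq fun _ => ENNReal.ofReal_ne_top]
  simp_rw [ENNReal.toReal_ofReal (hu _)]

lemma tsum_poisson_mixed_moment_ennreal (r₁ r₂ r₃ : ℝ≥0) (A₁ A₂ : ℝ≥0∞) {s : ℝ} (hs : 0 < s) :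
    ∑' j : ℕ × ℕ × ℕ, ENNReal.ofReal (exp (-r₁) * r₁ ^ j.1 / j.1 ! *
        (exp (-r₂) * r₂ ^ j.2.1 / j.2.1 !) * (exp (-r₃) * r₃ ^ j.2.2 / j.2.2 !)) *
        ((A₁ + j.1) * (A₂ + j.2.1) *
          ENNReal.ofReal (1 / ((s + ↑(j.1 + j.2.1 + j.2.2)) * (s + ↑(j.1 + j.2.1 + j.2.2) + 1)))) =
      A₁ * A₂ * ENNReal.ofReal (exp (-(r₁ + r₂ + r₃ : ℝ)) / (s * (s + 1)) *
          F11 s (s + 2) (r₁ + r₂ + r₃)) +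
        (A₁ * r₂ + A₂ * r₁) * ENNReal.ofReal (exp (-(r₁ + r₂ + r₃ : ℝ)) / ((s + 1) * (s + 2)) *
          F11 (s + 1) (s + 3) (r₁ + r₂ + r₃)) +
        r₁ * r₂ * ENNReal.ofReal (exp (-(r₁ + r₂ + r₃ : ℝ)) / ((s + 2) * (s + 3)) *
          F11 (s + 2) (s + 4) (r₁ + r₂ + r₃)) := by
  set f : ℕ → ℝ≥0∞ := fun n => ENNReal.ofReal (1 / ((s + n) * (s + n + 1))) with f_def
  have eval (a : ℝ) (k : ℕ) (hk : a = s + k) : ∫⁻ n, f (n + k) ∂Po(r₁ + r₂ + r₃) =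
      ENNReal.ofReal (exp (-(r₁ + r₂ + r₃ : ℝ)) / (a * (a + 1)) *
        F11 a (a + 2) (r₁ + r₂ + r₃)) := by
    rw [← NNReal.coe_add, ← NNReal.coe_add,
      ← lintegral_poissonMeasure_ofReal_one_div_mul (by rw [hk]; positivity), hk]
    refine lintegral_congr fun n => ?_
    simp only [f_def]
    push_cast
    ring_nf
  have eval0 := eval s 0 (by simp)
  simp only [Nat.add_zero] at eval0
  have moment := lintegral_poissonMeasure_mixed_moment r₁ r₂ r₃ A₁ A₂ f
  rw [lintegral_lintegral_lintegral_poissonMeasure_eq_tsum, eval0, eval (s + 1) 1 (by simp),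
    eval (s + 2) 2 (by norm_num), show s + 1 + 1 = s + 2 by ring, show s + 1 + 2 = s + 3 by ring,
    show s + 2 + 1 = s + 3 by ring, show s + 2 + 2 = s + 4 by ring] at moment
  exact moment

theorem tsum_poisson_mixed_moment (r₁ r₂ r₃ : ℝ≥0) {α₁ α₂ α₃ : ℝ} (h₁ : 0 ≤ α₁) (h₂ : 0 ≤ α₂)
    (hs : 0 < α₁ + α₂ + α₃) :
    ∑' j : ℕ × ℕ × ℕ, exp (-r₁) * r₁ ^ j.1 / j.1 ! * (exp (-r₂) * r₂ ^ j.2.1 / j.2.1 !) *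
        (exp (-r₃) * r₃ ^ j.2.2 / j.2.2 !) *
        ((α₁ + j.1) * (α₂ + j.2.1) /
          ((α₁ + α₂ + α₃ + (j.1 + j.2.1 + j.2.2)) * (α₁ + α₂ + α₃ + (j.1 + j.2.1 + j.2.2) + 1))) =
      α₁ * α₂ / ((α₁ + α₂ + α₃) * (α₁ + α₂ + α₃ + 1)) * exp (-(r₁ + r₂ + r₃ : ℝ)) *
          F11 (α₁ + α₂ + α₃) (α₁ + α₂ + α₃ + 2) (r₁ + r₂ + r₃) +
        (α₁ * r₂ + α₂ * r₁) / ((α₁ + α₂ + α₃ + 1) * (α₁ + α₂ + α₃ + 2)) *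
          exp (-(r₁ + r₂ + r₃ : ℝ)) * F11 (α₁ + α₂ + α₃ + 1) (α₁ + α₂ + α₃ + 3) (r₁ + r₂ + r₃) +
        r₁ * r₂ / ((α₁ + α₂ + α₃ + 2) * (α₁ + α₂ + α₃ + 3)) *
          exp (-(r₁ + r₂ + r₃ : ℝ)) * F11 (α₁ + α₂ + α₃ + 2) (α₁ + α₂ + α₃ + 4) (r₁ + r₂ + r₃) := by
  set s := α₁ + α₂ + α₃
  have term (j : ℕ × ℕ × ℕ) : ENNReal.ofReal (exp (-r₁) * r₁ ^ j.1 / j.1 ! *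
        (exp (-r₂) * r₂ ^ j.2.1 / j.2.1 !) * (exp (-r₃) * r₃ ^ j.2.2 / j.2.2 !) *
        ((α₁ + j.1) * (α₂ + j.2.1) /
          ((s + (j.1 + j.2.1 + j.2.2)) * (s + (j.1 + j.2.1 + j.2.2) + 1)))) =
      ENNReal.ofReal (exp (-r₁) * r₁ ^ j.1 / j.1 ! * (exp (-r₂) * r₂ ^ j.2.1 / j.2.1 !) *
        (exp (-r₃) * r₃ ^ j.2.2 / j.2.2 !)) *
        ((ENNReal.ofReal α₁ + j.1) * (ENNReal.ofReal α₂ + j.2.1) * ENNReal.ofReal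
          (1 / ((s + ↑(j.1 + j.2.1 + j.2.2)) * (s + ↑(j.1 + j.2.1 + j.2.2) + 1)))) := by
    rw [← ENNReal.ofReal_natCast, ← ENNReal.ofReal_natCast, ← ENNReal.ofReal_add h₁ (by positivity),
      ← ENNReal.ofReal_add h₂ (by positivity), ← ENNReal.ofReal_mul (by positivity),
      ← ENNReal.ofReal_mul (by positivity), ← ENNReal.ofReal_mul (by positivity)]
    congr 1
    push_cast
    ring
  have value_nonneg (a b c : ℝ) (ha : 0 < a) (hb : 0 < b) (hc : 0 < c) :
      0 ≤ exp (-(r₁ + r₂ + r₃ : ℝ)) / (a * b) * F11 a c (r₁ + r₂ + r₃) := by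
    have := F11_nonneg ha hc (by positivity : (0 : ℝ) ≤ r₁ + r₂ + r₃)
    positivity
  rw [tsum_eq_toReal_tsum_ofReal (fun j => by positivity), tsum_congr term,
    tsum_poisson_mixed_moment_ennreal r₁ r₂ r₃ _ _ hs,
    ENNReal.toReal_add (by finiteness) (by finiteness), ENNReal.toReal_add (by finiteness) (by finiteness)]
  simp only [ENNReal.toReal_mul]
  rw [ENNReal.toReal_add (by finiteness) (by finiteness)]
  simp only [ENNReal.toReal_mul, ENNReal.toReal_ofReal h₁, ENNReal.toReal_ofReal h₂,
    ENNReal.coe_toReal]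
  rw [ENNReal.toReal_ofReal (value_nonneg _ _ _ hs (by positivity) (by positivity)),
    ENNReal.toReal_ofReal (value_nonneg _ _ _ (by positivity) (by positivity) (by positivity)),
    ENNReal.toReal_ofReal (value_nonneg _ _ _ (by positivity) (by positivity) (by positivity))]
  ring

/-- The mean cross product `E[X'₁X'₂]` of the bivariate Non-central Dirichlet distribution,
defined through its Poisson mixture representation. -/
theorem ncdir_mean_cross_product (α1 α2 α3 lam1 lam2 lam3 : ℝ)
    (h1 : 0 < α1) (h2 : 0 < α2) (h3 : 0 < α3)
    (hl1 : 0 ≤ lam1) (hl2 : 0 ≤ lam2) (hl3 : 0 ≤ lam3) :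
    (∑' j : ℕ × ℕ × ℕ,
        (Real.exp (-(lam1 / 2)) * (lam1 / 2) ^ j.1 / (j.1.factorial : ℝ)) *
          (Real.exp (-(lam2 / 2)) * (lam2 / 2) ^ j.2.1 / (j.2.1.factorial : ℝ)) *
          (Real.exp (-(lam3 / 2)) * (lam3 / 2) ^ j.2.2 / (j.2.2.factorial : ℝ)) *
          ((α1 + j.1) * (α2 + j.2.1) /
            ((α1 + α2 + α3 + (j.1 + j.2.1 + j.2.2)) *
              (α1 + α2 + α3 + (j.1 + j.2.1 + j.2.2) + 1)))) =
      α1 * α2 / ((α1 + α2 + α3) * (α1 + α2 + α3 + 1)) *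
          Real.exp (-((lam1 + lam2 + lam3) / 2)) *
          F11 (α1 + α2 + α3) (α1 + α2 + α3 + 2) ((lam1 + lam2 + lam3) / 2) +
        (α1 * (lam2 / 2) + α2 * (lam1 / 2)) /
            ((α1 + α2 + α3 + 1) * (α1 + α2 + α3 + 2)) *
          Real.exp (-((lam1 + lam2 + lam3) / 2)) *
          F11 (α1 + α2 + α3 + 1) (α1 + α2 + α3 + 3) ((lam1 + lam2 + lam3) / 2) +
        (lam1 / 2) * (lam2 / 2) / ((α1 + α2 + α3 + 2) * (α1 + α2 + α3 + 3)) *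
          Real.exp (-((lam1 + lam2 + lam3) / 2)) *
          F11 (α1 + α2 + α3 + 2) (α1 + α2 + α3 + 4) ((lam1 + lam2 + lam3) / 2) := by
  rw [show (lam1 + lam2 + lam3) / 2 = lam1 / 2 + lam2 / 2 + lam3 / 2 by ring]
  exact tsum_poisson_mixed_moment ⟨lam1 / 2, by positivity⟩ ⟨lam2 / 2, by positivity⟩
    ⟨lam3 / 2, by positivity⟩ h1.le h2.le (by positivity)
end
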